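/- (Non-negative Alexandrov curvature of the space of persistence diagrams.) Let X, Y : Fin n → E be configurations, σ an optimal pairing between X and Y, and γ t i = (1−t) • X i + t • Y (σ i) the induced geodesic. Then for every configuration Z : Fin n → E and every t ∈ [0,1]: D(Z, γ t)² ≥ t · D(Z, Y)² + (1−t) · D(Z, X)² − t(1−t) · D(X, Y)². -/
import Mathlib


/-- The squared L²-matching distance between two configurations of `n` points. -/
noncomputable def sqD {E : Type*} [NormedAddCommGroup E] [InnerProductSpace ℝ E] {n : ℕ}
    (X Y : Fin n → E) : ℝ :=
  ⨅ σ : Equiv.Perm (Fin n), ∑ i, ‖X i - Y (σ i)‖ ^ 2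

/-- Law of cosines / interpolation identity in a real inner product space. -/
lemma interp_norm_sq {E : Type*} [NormedAddCommGroup E] [InnerProductSpace ℝ E]
    (t : ℝ) (x y z : E) :
    ‖z - ((1 - t) • x + t • y)‖ ^ 2
      = (1 - t) * ‖z - x‖ ^ 2 + t * ‖z - y‖ ^ 2 - t * (1 - t) * ‖x - y‖ ^ 2 := by
  have h : z - ((1 - t) • x + t • y) = (1 - t) • (z - x) + t • (z - y) := by module
  have hxy : x - y = (z - y) - (z - x) := by abel
  rw [h, hxy]
  simp only [← real_inner_self_eq_norm_sq, inner_add_add_self, inner_sub_sub_self,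
    real_inner_smul_left, real_inner_smul_right]
  rw [real_inner_comm (z - y) (z - x)]
  ring

lemma sqD_le {E : Type*} [NormedAddCommGroup E] [InnerProductSpace ℝ E] {n : ℕ}
    (X Y : Fin n → E) (τ : Equiv.Perm (Fin n)) :
    sqD X Y ≤ ∑ i, ‖X i - Y (τ i)‖ ^ 2 :=
  ciInf_le (Finite.bddBelow_range _) τ

/-- Non-negative Alexandrov curvature of the space of persistence diagrams:
the comparison inequality along a geodesic induced by an optimal pairing. -/
theorem nonneg_curvature_comparison
    {E : Type*} [NormedAddCommGroup E] [InnerProductSpace ℝ E] {n : ℕ}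
    (X Y Z : Fin n → E) (σ : Equiv.Perm (Fin n))
    (hσ : ∑ i, ‖X i - Y (σ i)‖ ^ 2 = sqD X Y)
    (γ : ℝ → Fin n → E) (hγ : ∀ t i, γ t i = (1 - t) • X i + t • Y (σ i)) :
    ∀ t ∈ Set.Icc (0 : ℝ) 1,
      sqD Z (γ t) ≥ t * sqD Z Y + (1 - t) * sqD Z X - t * (1 - t) * sqD X Y := by
  rintro t ⟨ht0, ht1⟩
  rw [ge_iff_le]; conv_rhs => rw [sqD]
  refine le_ciInf fun τ => ?_
  have key : ∑ i, ‖Z i - γ t (τ i)‖ ^ 2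
      = (1 - t) * ∑ i, ‖Z i - X (τ i)‖ ^ 2 + t * ∑ i, ‖Z i - Y (σ (τ i))‖ ^ 2
        - t * (1 - t) * ∑ i, ‖X (τ i) - Y (σ (τ i))‖ ^ 2 := by
    simp only [hγ, interp_norm_sq, Finset.sum_sub_distrib, Finset.sum_add_distrib,
      ← Finset.mul_sum]
  rw [key]
  have h1 : sqD Z X ≤ ∑ i, ‖Z i - X (τ i)‖ ^ 2 := sqD_le Z X τ
  have h2 : sqD Z Y ≤ ∑ i, ‖Z i - Y (σ (τ i))‖ ^ 2 := sqD_le Z Y (τ.trans σ)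
  have h3 : ∑ i, ‖X (τ i) - Y (σ (τ i))‖ ^ 2 = sqD X Y := by
    rw [← hσ]
    exact Fintype.sum_equiv τ _ _ fun i => rfl
  rw [h3]
  have ht1' : 0 ≤ 1 - t := by linarith
  nlinarith [mul_le_mul_of_nonneg_left h1 ht1', mul_le_mul_of_nonneg_left h2 ht0]
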